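/- For all integers r ≥ 0 and 0 ≤ k < N, one has |β_{r,k}| ≤ 2^{−rb} and |α_{r,k}| ≤ 2^{−r(b−2)}. -/

import Mathlib

/-!
`β_{r,k}` is `C(-t, r)` with `t = k/N ∈ [0, 1]`, and `|C(-t, r)| = t(t+1)⋯(t+r-1)/r! ≤ 1`.
For `α_{r,k}` with `r ≥ 1`, the argument `x = (k+r)/N - 1` of the binomial coefficient lies in
`[-1, r]`, so each of the `r - 1` factors `x - j` has modulus at most `r`; together with the
prefactor `k/(rN) ≤ 1/r` this gives `|α_{r,k}| ≤ r^r/r! · 2^{-rb} ≤ e^r · 2^{-rb} ≤ 4^r · 2^{-rb}`.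
-/

/-- Generalized binomial coefficient `C(x, r) = x (x-1) ⋯ (x-r+1) / r!`. -/
noncomputable def gbc (x : ℝ) (r : ℕ) : ℝ :=
  (∏ j ∈ Finset.range r, (x - j)) / (r.factorial : ℝ)

/-- `β_{r,k} = C(-k/N, r) (-2^(-b))^r`. -/
noncomputable def betaC (b N r k : ℕ) : ℝ :=
  gbc (-(k : ℝ) / N) r * (-(2:ℝ) ^ (-(b:ℤ))) ^ r

/-- `α_{0,k} = 1` and `α_{r,k} = (k/(rN)) C((k+r)/N - 1, r-1) (-2^(-b))^r` for `r ≥ 1`. -/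
noncomputable def alphaC (b N r k : ℕ) : ℝ :=
  if r = 0 then 1
  else ((k : ℝ) / (r * N)) * gbc (((k : ℝ) + r) / N - 1) (r - 1) * (-(2:ℝ) ^ (-(b:ℤ))) ^ r

open Finset

lemma abs_gbc_le_pow_div_factorial {x c : ℝ} {m : ℕ} (hc : ∀ j < m, |x - j| ≤ c) :
    |gbc x m| ≤ c ^ m / m.factorial := by
  rw [gbc, abs_div, Nat.abs_cast, abs_prod]
  gcongr
  calc ∏ j ∈ range m, |x - j| ≤ ∏ _j ∈ range m, c :=
        prod_le_prod (fun _ _ ↦ abs_nonneg _) fun j hj ↦ hc j (mem_range.mp hj)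
    _ = c ^ m := by rw [prod_const, card_range]

lemma abs_gbc_neg_le_one {t : ℝ} (ht₀ : 0 ≤ t) (ht₁ : t ≤ 1) (r : ℕ) : |gbc (-t) r| ≤ 1 := by
  rw [gbc, abs_div, Nat.abs_cast, div_le_one (by positivity), abs_prod,
    ← prod_range_add_one_eq_factorial, Nat.cast_prod]
  refine prod_le_prod (fun _ _ ↦ abs_nonneg _) fun j _ ↦ ?_
  rw [abs_le]
  push_cast
  constructor <;> linarith [(j.cast_nonneg : (0:ℝ) ≤ j)]

lemma pow_self_div_factorial_le_four_pow (r : ℕ) : (r : ℝ) ^ r / r.factorial ≤ 4 ^ r :=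
  calc (r : ℝ) ^ r / r.factorial ≤ Real.exp r := 
      Real.pow_div_factorial_le_exp _ r.cast_nonneg r
    _ = Real.exp 1 ^ r := by rw [← Real.exp_nat_mul, mul_one]
    _ ≤ 4 ^ r := by gcongr; linarith [Real.exp_one_lt_three]

lemma abs_neg_two_zpow_pow (b r : ℕ) :
    |(-(2:ℝ) ^ (-(b:ℤ))) ^ r| = (2:ℝ) ^ (-((r:ℤ) * b)) := by
  rw [abs_pow, abs_neg, abs_of_pos (by positivity), ← zpow_natCast, ← zpow_mul]
  ring_nf

lemma two_zpow_neg_mul_sub_two (b r : ℕ) :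
    (2:ℝ) ^ (-((r:ℤ) * ((b:ℤ) - 2))) = 4 ^ r * (2:ℝ) ^ (-((r:ℤ) * b)) := by
  rw [show (4:ℝ) ^ r = (2:ℝ) ^ ((2 * r : ℕ) : ℤ) by rw [zpow_natCast, pow_mul]; norm_num,
    ← zpow_add₀ two_ne_zero]
  push_cast
  ring_nf

lemma abs_betaC_le (b r : ℕ) {N k : ℕ} (hk : k ≤ N) :
    |betaC b N r k| ≤ (2:ℝ) ^ (-((r : ℤ) * b)) := by
  have ht₁ : (k : ℝ) / N ≤ 1 := div_le_one_of_le₀ (by exact_mod_cast hk) N.cast_nonneg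
  rw [betaC, abs_mul, abs_neg_two_zpow_pow, neg_div]
  exact mul_le_of_le_one_left (by positivity) (abs_gbc_neg_le_one (by positivity) ht₁ r)

lemma abs_alphaC_le (b : ℕ) {N r k : ℕ} (hN : 0 < N) (hk : k ≤ N) :
    |alphaC b N r k| ≤ (2:ℝ) ^ (-((r : ℤ) * ((b : ℤ) - 2))) := by
  rcases eq_or_ne r 0 with rfl | hr
  · simp [alphaC]
  have hN' : (1 : ℝ) ≤ N := by exact_mod_cast hN
  have hk' : (k : ℝ) ≤ N := by exact_mod_cast hk
  have hr' : (1 : ℝ) ≤ r := by exact_mod_cast Nat.one_le_iff_ne_zero.mpr hr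
  set x : ℝ := ((k : ℝ) + r) / N - 1
  have hx_lb : -1 ≤ x := by simp only [x]; linarith [show 0 ≤ ((k : ℝ) + r) / N by positivity]
  have hx_ub : x ≤ r := by
    have : ((k : ℝ) + r) / N ≤ r + 1 := by rw [div_le_iff₀ (by positivity)]; nlinarith
    simp only [x]; linarith
  have hfactors : ∀ j < r - 1, |x - j| ≤ r := fun j hj ↦ by
    have : (j : ℝ) + 2 ≤ r := by exact_mod_cast (by omega : j + 2 ≤ r)
    rw [abs_le]; constructor <;> linarith [(j.cast_nonneg : (0:ℝ) ≤ j)]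
  have hprefactor : |(k : ℝ) / (r * N)| ≤ 1 / r := by
    rw [abs_of_nonneg (by positivity), div_le_div_iff₀ (by positivity) (by positivity)]
    nlinarith
  have hkey : |(k : ℝ) / (r * N)| * |gbc x (r - 1)| ≤ 4 ^ r :=
    calc _ ≤ 1 / r * ((r : ℝ) ^ (r - 1) / (r - 1).factorial) :=
          mul_le_mul hprefactor (abs_gbc_le_pow_div_factorial hfactors) (abs_nonneg _)
            (by positivity)
      _ = (r : ℝ) ^ (r - 1) / r.factorial := by
          rw [← Nat.mul_factorial_pred hr]; push_cast; field_simp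
      _ ≤ (r : ℝ) ^ r / r.factorial := by gcongr; exact Nat.sub_le r 1
      _ ≤ 4 ^ r := pow_self_div_factorial_le_four_pow r
  rw [alphaC, if_neg hr, abs_mul, abs_mul, abs_neg_two_zpow_pow, two_zpow_neg_mul_sub_two]
  exact mul_le_mul_of_nonneg_right hkey (by positivity)

theorem alpha_beta_coeff_bounds_general (b N : ℕ)
    (r k : ℕ) (hk : k < N) :
    |betaC b N r k| ≤ (2:ℝ) ^ (-((r : ℤ) * b)) ∧
    |alphaC b N r k| ≤ (2:ℝ) ^ (-((r : ℤ) * ((b : ℤ) - 2))) :=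
  ⟨abs_betaC_le b r hk.le, abs_alphaC_le b (by omega) hk.le⟩

/-- for `r ≥ 0` and `0 ≤ k < N`, `|β_{r,k}| ≤ 2^(-rb)` and
`|α_{r,k}| ≤ 2^(-r(b-2))`. -/
theorem alpha_beta_coeff_bounds (b N : ℕ) (hb : 4 ≤ b) (hN : 3 ≤ N)
    (r k : ℕ) (hk : k < N) :
    |betaC b N r k| ≤ (2:ℝ) ^ (-((r : ℤ) * b)) ∧
    |alphaC b N r k| ≤ (2:ℝ) ^ (-((r : ℤ) * ((b : ℤ) - 2))) :=
  alpha_beta_coeff_bounds_general b N r k hk
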